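/- Let P(s) = ∑_{n=2}^N a_n n^{-s} be a Dirichlet polynomial with zero constant term and let t > 0. Then for every θ > 0: P(θ) = (Γ(t+1)/(2π)) ∫_{-∞}^{+∞} I_t P(iτ)/(θ - iτ)^{t+1} dτ, where w^{t+1} = exp((t+1)·Log w) denotes the principal branch of the power on the right half-plane Re w > 0. -/

import Mathlib

/-!
For `n ≥ 2` put `L = log n > 0`. The function `f(x) = x^t e^{-θx}` on `x > 0` (zero for `x ≤ 0`)
has Fourier transform `Γ(t+1) / (θ + 2πiξ)^{t+1}`, which is integrable since `t > 0`; Fourier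
inversion at `x = L` gives `L^t n^{-θ} = (Γ(t+1)/2π) ∫ n^{-iτ} / (θ - iτ)^{t+1} dτ`. Multiplying by
`a_n L^{-t}` and summing over `n` gives the formula; the term `n = 1` vanishes because `a_1 = 0`.
The Fourier transform of `f` is a Laplace transform at a complex point `θ + 2πiξ`; it is computed
by analytic continuation from the real Gamma integral.
-/

open MeasureTheory Complex Set

noncomputable section

/-- The infinite polytorus `T^∞`, realized as a countable product of (additive) circles. -/
abbrev PolyTorus : Type := ℕ → UnitAddCircle

/-- The normalized Haar probability measure `m_∞` on the infinite polytorus. -/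
noncomputable def haarPolyTorus : Measure PolyTorus := Measure.addHaarMeasure ⊤

/-- The Bohr lift of the Dirichlet monomial `n^{-s}`: the function
`z ↦ ∏_j z_j^{ν_j(n)}` where `ν_j(n)` is the exponent of the `j`-th prime in `n`. -/
noncomputable def bohrMonomial (z : PolyTorus) (n : ℕ) : ℂ :=
  n.factorization.prod fun q k => (((z (Nat.count Nat.Prime q)).toCircle : ℂ)) ^ k

/-- The `H^p`-norm of the Dirichlet polynomial `s ↦ ∑_{n=1}^N a n · n^{-s}`. -/
noncomputable def HpNorm (p : ℝ) (N : ℕ) (a : ℕ → ℂ) : ℝ :=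
  (∫ z : PolyTorus, ‖∑ n ∈ Finset.Icc 1 N, a n * bohrMonomial z n‖ ^ p ∂haarPolyTorus) ^ (1 / p)

/-- The coefficients of the translated Dirichlet polynomial `P_σ(s) = P(σ + s)`. -/
noncomputable def transl (σ : ℝ) (a : ℕ → ℂ) : ℕ → ℂ :=
  fun n => a n * (((n : ℝ) ^ (-σ) : ℝ) : ℂ)

/-- The density `h_α(σ) = (2^{α+1}/Γ(α+1)) σ^α e^{-2σ}`. -/
noncomputable def hWeight (α : ℝ) (σ : ℝ) : ℝ :=
  (2 ^ (α + 1) / Real.Gamma (α + 1)) * σ ^ α * Real.exp (-2 * σ)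

/-- The `A^p_α`-norm of the Dirichlet polynomial with coefficients `a` (up to degree `N`). -/
noncomputable def ApNorm (p α : ℝ) (N : ℕ) (a : ℕ → ℂ) : ℝ :=
  (∫ σ in Set.Ioi (0 : ℝ), HpNorm p N (transl σ a) ^ p * hWeight α σ) ^ (1 / p)

/-- Evaluation of the Dirichlet polynomial `∑_{n=1}^N a n · n^{-s}` at `s`. -/
noncomputable def dirEval (N : ℕ) (a : ℕ → ℂ) (s : ℂ) : ℂ :=
  ∑ n ∈ Finset.Icc 1 N, a n * (n : ℂ) ^ (-s)

/-- The norm of the evaluation functional `δ_s` on `A^p_α`. -/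
noncomputable def deltaNorm (p α : ℝ) (s : ℂ) : ℝ :=
  sSup {x : ℝ | ∃ (N : ℕ) (a : ℕ → ℂ), ApNorm p α N a ≤ 1 ∧ x = ‖dirEval N a s‖}

/-- The norm of the evaluation functional `δ_s` on `A^p_{α,∞}` (zero constant term). -/
noncomputable def deltaNormZero (p α : ℝ) (s : ℂ) : ℝ :=
  sSup {x : ℝ | ∃ (N : ℕ) (a : ℕ → ℂ), a 1 = 0 ∧ ApNorm p α N a ≤ 1 ∧ x = ‖dirEval N a s‖}

/-- Coefficients of `I_t P`: `a n (log n)^{-t}`. -/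
noncomputable def Icoef (t : ℝ) (a : ℕ → ℂ) : ℕ → ℂ :=
  fun n => a n * ((Real.log n ^ (-t) : ℝ) : ℂ)

open ProbabilityTheory Filter Topology FourierTransform
open scoped Real

lemma integrableOn_rpow_mul_exp_neg_mul {p c : ℝ} (hp : -1 < p) (hc : 0 < c) :
    IntegrableOn (fun x : ℝ => x ^ p * Real.exp (-(c * x))) (Ioi 0) := by
  refine (integrableOn_rpow_mul_exp_neg_mul_rpow hp one_pos hc).congr_fun (fun x _ => ?_)
    measurableSet_Ioi
  simp [Real.rpow_one]

def rpowWeight (p : ℝ) : Measure ℝ :=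
  (volume.restrict (Ioi 0)).withDensity fun x => (x ^ p).toNNReal

lemma integral_rpowWeight (p : ℝ) (g : ℝ → ℂ) :
    ∫ x, g x ∂rpowWeight p = ∫ x in Ioi 0, ((x ^ p : ℝ) : ℂ) * g x := by
  rw [rpowWeight, integral_withDensity_eq_integral_smul (by fun_prop)]
  refine setIntegral_congr_fun measurableSet_Ioi fun x hx => ?_
  rw [NNReal.smul_def, Real.coe_toNNReal _ (Real.rpow_nonneg (le_of_lt hx) p), real_smul]

lemma Ioi_subset_integrableExpSet_rpowWeight {p : ℝ} (hp : -1 < p) :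
    Ioi 0 ⊆ integrableExpSet (fun x => -x) (rpowWeight p) := by
  intro c hc
  rw [integrableExpSet, mem_ofPred_eq, rpowWeight,
    integrable_withDensity_iff_integrable_smul (by fun_prop)]
  refine (integrableOn_rpow_mul_exp_neg_mul hp hc).congr_fun (fun x hx => ?_) measurableSet_Ioi
  rw [NNReal.smul_def, Real.coe_toNNReal _ (Real.rpow_nonneg (le_of_lt hx) p), smul_eq_mul]
  simp

lemma complexMGF_neg_rpowWeight_ofReal {p r : ℝ} (hp : -1 < p) (hr : 0 < r) :
    complexMGF (fun x => -x) (rpowWeight p) r = Real.Gamma (p + 1) / (r : ℂ) ^ ((p : ℂ) + 1) := by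
  have hint := Real.integral_rpow_mul_exp_neg_mul_Ioi (by linarith : 0 < p + 1) hr
  rw [add_sub_cancel_right] at hint
  rw [complexMGF, integral_rpowWeight]
  calc ∫ x in Ioi 0, ((x ^ p : ℝ) : ℂ) * cexp ((r : ℂ) * ((-x : ℝ) : ℂ))
      = ((∫ x in Ioi 0, x ^ p * Real.exp (-(r * x)) : ℝ) : ℂ) := by
        rw [← integral_complex_ofReal]
        push_cast
        ring_nf
    _ = _ := by
        rw [hint, one_div, Real.inv_rpow hr.le, ofReal_mul, ofReal_inv, ofReal_cpow hr.le]
        push_cast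
        ring

/-- The left side is the complex moment generating function of `x ↦ -x` under `x^p dx` on
`(0, ∞)`, hence analytic on `Re w > 0`; it agrees with the right side on the positive reals. -/
theorem integral_rpow_mul_cexp_neg_mul_Ioi {p : ℝ} (hp : -1 < p) {w : ℂ} (hw : 0 < w.re) :
    ∫ x in Ioi 0, ((x ^ p : ℝ) : ℂ) * cexp (-(w * x)) = Real.Gamma (p + 1) / w ^ ((p : ℂ) + 1) := by
  set U : Set ℂ := {z | 0 < z.re}
  have hU : IsOpen U := isOpen_lt continuous_const continuous_re
  have hUslit : U ⊆ slitPlane := fun z hz => mem_slitPlane_iff.2 (Or.inl hz)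
  have hmgf : AnalyticOnNhd ℂ (complexMGF (fun x => -x) (rpowWeight p)) U := by
    refine analyticOnNhd_complexMGF.mono fun z hz => ?_
    exact interior_maximal (Ioi_subset_integrableExpSet_rpowWeight hp) isOpen_Ioi hz
  have hgamma : AnalyticOnNhd ℂ (fun z : ℂ => (Real.Gamma (p + 1) : ℂ) / z ^ ((p : ℂ) + 1)) U := by
    refine DifferentiableOn.analyticOnNhd (fun z hz => ?_) hU
    refine (differentiableAt_const _).div (differentiableAt_id.cpow_const (hUslit hz)) ?_
      |>.differentiableWithinAt
    exact fun h => slitPlane_ne_zero (hUslit hz) ((cpow_eq_zero_iff _ _).1 h).1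
  have hfreq : ∃ᶠ z in 𝓝[≠] (1 : ℂ), complexMGF (fun x => -x) (rpowWeight p) z
      = (Real.Gamma (p + 1) : ℂ) / z ^ ((p : ℂ) + 1) := by
    have hto : Tendsto ((↑) : ℝ → ℂ) (𝓝[≠] 1) (𝓝[≠] 1) :=
      tendsto_nhdsWithin_iff.2 ⟨(continuous_ofReal.tendsto 1).mono_left nhdsWithin_le_nhds,
        eventually_nhdsWithin_of_forall fun x hx => by simpa using hx⟩
    refine hto.frequently (Eventually.frequently ?_)
    filter_upwards [nhdsWithin_le_nhds (Ioi_mem_nhds one_pos)] with r hr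
      using complexMGF_neg_rpowWeight_ofReal hp hr
  have := hmgf.eqOn_of_preconnected_of_frequently_eq hgamma
    (convex_halfSpace_re_gt 0).isPreconnected (by simp [U]) hfreq hw
  rw [← integral_rpowWeight]
  simpa [complexMGF] using this

lemma norm_inv_cpow_sub_mul_I_le {θ : ℝ} (hθ : 0 < θ) {s : ℝ} (hs : 0 ≤ s) (τ : ℝ) :
    ‖(((θ : ℂ) - τ * I) ^ (s : ℂ))⁻¹‖ ≤ (θ⁻¹ + 1) ^ s * (1 + ‖τ‖) ^ (-s) := by
  set z : ℂ := θ - τ * I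
  have hθz : θ ≤ ‖z‖ := by simpa [z, abs_of_pos hθ] using abs_re_le_norm z
  have hτz : ‖τ‖ ≤ ‖z‖ := by simpa [z] using abs_im_le_norm z
  have hbound : (1 + ‖τ‖) / (θ⁻¹ + 1) ≤ ‖z‖ := by
    rw [div_le_iff₀ (by positivity)]
    have : 1 ≤ θ⁻¹ * ‖z‖ := by rwa [← div_eq_inv_mul, one_le_div hθ]
    nlinarith
  calc ‖(z ^ (s : ℂ))⁻¹‖ = (‖z‖ ^ s)⁻¹ := by rw [norm_inv, norm_cpow_real]
    _ ≤ (((1 + ‖τ‖) / (θ⁻¹ + 1)) ^ s)⁻¹ :=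
        inv_anti₀ (by positivity) (Real.rpow_le_rpow (by positivity) hbound hs)
    _ = _ := by
        rw [Real.div_rpow (by positivity) (by positivity), inv_div, div_eq_mul_inv,
          Real.rpow_neg (by positivity)]

lemma integrable_inv_cpow_sub_mul_I {θ : ℝ} (hθ : 0 < θ) {s : ℝ} (hs : 1 < s) :
    Integrable fun τ : ℝ => (((θ : ℂ) - τ * I) ^ (s : ℂ))⁻¹ := by
  have hslit : ∀ τ : ℝ, (θ : ℂ) - τ * I ∈ slitPlane := fun τ =>
    mem_slitPlane_iff.2 (Or.inl (by simpa using hθ))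
  have hcont : Continuous fun τ : ℝ => (((θ : ℂ) - τ * I) ^ (s : ℂ))⁻¹ :=
    ((by fun_prop : Continuous fun τ : ℝ => (θ : ℂ) - τ * I).cpow continuous_const hslit).inv₀
      fun τ h => slitPlane_ne_zero (hslit τ) ((cpow_eq_zero_iff _ _).1 h).1
  refine ((integrable_one_add_norm (by simpa using hs)).const_mul ((θ⁻¹ + 1) ^ s)).mono'
    hcont.aestronglyMeasurable (Eventually.of_forall fun τ => ?_)
  exact norm_inv_cpow_sub_mul_I_le hθ (by linarith) τ

def gammaKernel (p θ : ℝ) : ℝ → ℂ :=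
  indicator (Ioi 0) fun x => ((x ^ p : ℝ) : ℂ) * cexp (-(θ * x))

lemma integrable_gammaKernel {p θ : ℝ} (hp : -1 < p) (hθ : 0 < θ) :
    Integrable (gammaKernel p θ) := by
  rw [gammaKernel, integrable_indicator_iff measurableSet_Ioi]
  refine IntegrableOn.congr_fun (integrableOn_rpow_mul_exp_neg_mul hp hθ).ofReal
    (fun x _ => ?_) measurableSet_Ioi
  change ((x ^ p * Real.exp (-(θ * x)) : ℝ) : ℂ) = _
  push_cast
  rfl

lemma fourier_gammaKernel {p θ : ℝ} (hp : -1 < p) (hθ : 0 < θ) (ξ : ℝ) :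
    𝓕 (gammaKernel p θ) ξ = Real.Gamma (p + 1) / (θ + 2 * π * ξ * I) ^ ((p : ℂ) + 1) := by
  have hintegrand : ∀ x : ℝ, cexp (((-2 * π * inner ℝ x ξ : ℝ) : ℂ) * I) • gammaKernel p θ x
      = indicator (Ioi 0)
          (fun x : ℝ => ((x ^ p : ℝ) : ℂ) * cexp (-((θ + 2 * π * ξ * I) * x))) x := by
    intro x
    by_cases hx : x ∈ Ioi 0
    · rw [gammaKernel, indicator_of_mem hx, indicator_of_mem hx, smul_eq_mul,
        Real.inner_apply, mul_left_comm, ← Complex.exp_add]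
      push_cast
      ring_nf
    · rw [gammaKernel, indicator_of_notMem hx, indicator_of_notMem hx, smul_zero]
  rw [Real.fourier_eq', funext hintegrand, integral_indicator measurableSet_Ioi,
    integral_rpow_mul_cexp_neg_mul_Ioi hp (by simpa using hθ)]

lemma continuousAt_gammaKernel (p θ : ℝ) {L : ℝ} (hL : 0 < L) :
    ContinuousAt (gammaKernel p θ) L := by
  have hcont : ContinuousAt (fun x : ℝ => ((x ^ p : ℝ) : ℂ) * cexp (-(θ * x))) L :=
    (continuous_ofReal.continuousAt.comp (Real.continuousAt_rpow_const L p (Or.inl hL.ne'))).mul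
      (by fun_prop)
  refine hcont.congr_of_eventuallyEq ?_
  filter_upwards [Ioi_mem_nhds hL] with x hx
  rw [gammaKernel, indicator_of_mem hx]

theorem integral_cexp_div_cpow_sub_mul_I {p θ L : ℝ} (hp : 0 < p) (hθ : 0 < θ) (hL : 0 < L) :
    ((Real.Gamma (p + 1) / (2 * π) : ℝ) : ℂ) *
      ∫ τ : ℝ, cexp (-(L * τ * I)) / ((θ : ℂ) - τ * I) ^ ((p : ℂ) + 1)
      = ((L ^ p : ℝ) : ℂ) * cexp (-(θ * L)) := by
  set g : ℝ → ℂ := fun τ => cexp (-(L * τ * I)) / ((θ : ℂ) - τ * I) ^ ((p : ℂ) + 1)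
  have h2π : -(2 * π) ≠ 0 := by simp [Real.pi_ne_zero]
  have hFint : Integrable (𝓕 (gammaKernel p θ)) := by
    have h := ((integrable_inv_cpow_sub_mul_I hθ (s := p + 1) (by linarith)).comp_mul_left'
      h2π).const_mul (Real.Gamma (p + 1) : ℂ)
    refine h.congr (Eventually.of_forall fun ξ => ?_)
    rw [fourier_gammaKernel (by linarith) hθ, div_eq_mul_inv]
    push_cast
    ring_nf
  have hinv := (integrable_gammaKernel (by linarith) hθ).fourierInv_fourier_eq hFint
    (continuousAt_gammaKernel p θ hL)
  -- Fourier inversion at `L`, followed by the substitution `τ = -2πξ`.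
  have hintegrand : ∀ ξ : ℝ, cexp (((2 * π * inner ℝ ξ L : ℝ) : ℂ) * I) • 𝓕 (gammaKernel p θ) ξ
      = Real.Gamma (p + 1) * g (-(2 * π) * ξ) := by
    intro ξ
    rw [fourier_gammaKernel (by linarith) hθ, Real.inner_apply, smul_eq_mul]
    simp only [g]
    push_cast
    ring_nf
  rw [Real.fourierInv_eq', funext hintegrand, integral_const_mul,
    Measure.integral_comp_mul_left g, gammaKernel, indicator_of_mem (mem_Ioi.2 hL)] at hinv
  rw [← hinv, abs_inv, abs_neg, abs_of_pos Real.two_pi_pos, real_smul]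
  push_cast
  ring

lemma integrable_cpow_neg_mul_I_div {x p θ : ℝ} (hx : 0 < x) (hp : 0 < p) (hθ : 0 < θ) :
    Integrable fun τ : ℝ => (x : ℂ) ^ (-(τ * I)) / ((θ : ℂ) - τ * I) ^ ((p : ℂ) + 1) := by
  have hD := integrable_inv_cpow_sub_mul_I hθ (s := p + 1) (by linarith)
  push_cast at hD
  refine hD.bdd_mul (c := 1) ?_ (Eventually.of_forall fun τ => ?_)
  · exact (Continuous.const_cpow (by fun_prop) (Or.inl (by exact_mod_cast hx.ne')))
      |>.aestronglyMeasurable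
  · simp [norm_cpow_eq_rpow_re_of_pos hx]

lemma cpow_neg_eq_integral {x t θ : ℝ} (hx : 1 < x) (ht : 0 < t) (hθ : 0 < θ) :
    (x : ℂ) ^ (-(θ : ℂ)) = ((Real.Gamma (t + 1) / (2 * π) : ℝ) : ℂ) *
      ((Real.log x ^ (-t) : ℝ) : ℂ) *
        ∫ τ : ℝ, (x : ℂ) ^ (-(τ * I)) / ((θ : ℂ) - τ * I) ^ ((t : ℂ) + 1) := by
  set L := Real.log x
  have hL : 0 < L := Real.log_pos hx
  have hcpow : ∀ s : ℂ, (x : ℂ) ^ s = cexp (L * s) := fun s => by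
    rw [cpow_def_of_ne_zero (by exact_mod_cast (by linarith : x ≠ 0)), ofReal_log (by linarith)]
  have hkey := integral_cexp_div_cpow_sub_mul_I ht hθ hL
  simp_rw [hcpow, mul_neg, ← mul_assoc]
  rw [mul_right_comm, hkey, mul_right_comm, ← ofReal_mul (L ^ t), ← Real.rpow_add hL,
    add_neg_cancel, Real.rpow_zero, ofReal_one, one_mul, mul_comm (L : ℂ)]

/-- fractional Cauchy-type representation formula for Dirichlet polynomials. -/
theorem stmt7 (N : ℕ) (a : ℕ → ℂ) (ha1 : a 1 = 0) (t : ℝ) (ht : 0 < t)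
    (θ : ℝ) (hθ : 0 < θ) :
    dirEval N a (θ : ℂ) = ((Real.Gamma (t + 1) / (2 * Real.pi) : ℝ) : ℂ) *
      ∫ τ : ℝ,
        dirEval N (Icoef t a) ((τ : ℂ) * Complex.I) /
          ((θ : ℂ) - (τ : ℂ) * Complex.I) ^ ((t : ℂ) + 1) := by
  have hterm : ∀ n ∈ Finset.Icc 1 N, a n * (n : ℂ) ^ (-(θ : ℂ))
      = ((Real.Gamma (t + 1) / (2 * π) : ℝ) : ℂ) *
        ∫ τ : ℝ, Icoef t a n * (n : ℂ) ^ (-(τ * I)) / ((θ : ℂ) - τ * I) ^ ((t : ℂ) + 1) := by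
    intro n hn
    rcases (Finset.mem_Icc.1 hn).1.eq_or_lt with rfl | hn1
    · simp [Icoef, ha1]
    · have h := cpow_neg_eq_integral (x := n) (by exact_mod_cast hn1) ht hθ
      rw [ofReal_natCast] at h
      simp_rw [mul_div_assoc, integral_const_mul, h, Icoef]
      ring
  have hint : ∀ n ∈ Finset.Icc 1 N, Integrable fun τ : ℝ =>
      Icoef t a n * (n : ℂ) ^ (-(τ * I)) / ((θ : ℂ) - τ * I) ^ ((t : ℂ) + 1) := fun n hn => by
    have h := integrable_cpow_neg_mul_I_div (x := n)
      (by exact_mod_cast (Finset.mem_Icc.1 hn).1) ht hθ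
    rw [ofReal_natCast] at h
    simpa only [mul_div_assoc] using h.const_mul (Icoef t a n)
  rw [dirEval, Finset.sum_congr rfl hterm]
  simp_rw [← Finset.mul_sum, ← integral_finsetSum _ hint, dirEval, Finset.sum_div]

end
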